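/- arXiv:2002.08797 — 5 statements merged into one kernel-verified Lean document; each statement's English description precedes it below -/
import Mathlib

section
/- The ReLU correlation function f(c) = (1/π)(c·arcsin(c) + √(1−c²)) + c/2 satisfies f(c) ≥ c for all c ∈ [0,1]. -/
open Real Set

noncomputable def reluCorr (c : ℝ) : ℝ :=
  (1 / π) * (c * Real.arcsin c + Real.sqrt (1 - c ^ 2)) + c / 2

/-! With `θ = arccos c`, the excess `reluCorr c - c` is `(sin θ - θ cos θ) / π`, and
`θ cos θ ≤ sin θ` on `[0, π]` is `θ ≤ tan θ` where `cos θ > 0`, and trivial where `cos θ ≤ 0`. -/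

lemma Real.mul_cos_le_sin {x : ℝ} (h₀ : 0 ≤ x) (h₁ : x ≤ π) : x * cos x ≤ sin x := by
  have hsin : 0 ≤ sin x := sin_nonneg_of_nonneg_of_le_pi h₀ h₁
  rcases lt_or_ge x (π / 2) with hx | hx
  · have hcos : 0 < cos x := cos_pos_of_mem_Ioo ⟨by linarith [pi_pos], hx⟩
    have htan : x ≤ sin x / cos x := tan_eq_sin_div_cos x ▸ le_tan h₀ hx
    exact (le_div_iff₀ hcos).mp htan
  · have hcos : cos x ≤ 0 := cos_nonpos_of_pi_div_two_le_of_le hx (by linarith [pi_pos])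
    nlinarith

lemma Real.arccos_mul_le_sqrt_one_sub_sq {c : ℝ} (h₀ : -1 ≤ c) (h₁ : c ≤ 1) :
    arccos c * c ≤ √(1 - c ^ 2) := by
  simpa only [cos_arccos h₀ h₁, sin_arccos] using
    mul_cos_le_sin (arccos_nonneg c) (arccos_le_pi c)

lemma reluCorr_sub_self (c : ℝ) : reluCorr c - c = (√(1 - c ^ 2) - arccos c * c) / π := by
  rw [reluCorr, arcsin_eq_pi_div_two_sub_arccos]
  field_simp [pi_ne_zero]
  ring

theorem reluCorr_ge_self : ∀ c ∈ Set.Icc (0 : ℝ) 1, c ≤ reluCorr c := by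
  rintro c ⟨h₀, h₁⟩
  have key := sub_nonneg.mpr (arccos_mul_le_sqrt_one_sub_sq (by linarith) h₁)
  rw [← sub_nonneg, reluCorr_sub_self]
  exact div_nonneg key pi_pos.le
end

section
/- The ReLU correlation function f(c) = (1/π)(c·arcsin(c) + √(1−c²)) + c/2 is convex on [−1,1]. -/
open Real Set

-- The `x / √(1 - x²)` terms coming from `x * arcsin x` and from `√(1 - x²)` cancel.
lemma hasDerivAt_mul_arcsin_add_sqrt_one_sub_sq {x : ℝ} (hx : x ∈ Ioo (-1 : ℝ) 1) :
    HasDerivAt (fun c => c * arcsin c + √(1 - c ^ 2)) (arcsin x) x := by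
  have hpos : 0 < 1 - x ^ 2 := by nlinarith [hx.1, hx.2]
  have hsq : HasDerivAt (fun c : ℝ => 1 - c ^ 2) (-(2 * x)) x := by
    simpa using (hasDerivAt_pow 2 x).const_sub 1
  refine (((hasDerivAt_id' x).mul (hasDerivAt_arcsin hx.1.ne' hx.2.ne)).add
    (hsq.sqrt hpos.ne')).congr_deriv ?_
  field_simp
  ring

lemma hasDerivAt_reluCorr {x : ℝ} (hx : x ∈ Ioo (-1 : ℝ) 1) :
    HasDerivAt reluCorr (1 / π * arcsin x + 1 / 2) x := by
  refine (((hasDerivAt_mul_arcsin_add_sqrt_one_sub_sq hx).const_mul (1 / π)).add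
    ((hasDerivAt_id' x).div_const 2)).congr_deriv ?_
  ring

lemma continuous_reluCorr : Continuous reluCorr := by
  unfold reluCorr
  fun_prop

theorem reluCorr_convexOn : ConvexOn ℝ (Set.Icc (-1 : ℝ) 1) reluCorr := by
  refine MonotoneOn.convexOn_of_deriv (convex_Icc _ _) continuous_reluCorr.continuousOn ?_ ?_ <;>
    rw [interior_Icc]
  · exact fun x hx => (hasDerivAt_reluCorr hx).differentiableAt.differentiableWithinAt
  · intro a ha b hb hab
    rw [(hasDerivAt_reluCorr ha).deriv, (hasDerivAt_reluCorr hb).deriv]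
    gcongr
end

section
/- For Z₁, Z₂ independent standard Gaussian random variables and c ∈ [−1,1], the expectation E[ReLU(Z₁)·ReLU(cZ₁ + √(1−c²)Z₂)] equals (1/(2π))(c·arcsin(c) + √(1−c²)) + c/4. -/
/-!
Write `c = sin β` with `β = arcsin c ∈ [-π/2, π/2]`, so that `√(1 - c²) = cos β`. In polar
coordinates `(Z₁, Z₂) = r (cos θ, sin θ)` the second argument becomes `r sin (θ + β)`, and the
integrand is `r²` times the angular factor `max (cos θ) 0 * max (sin (θ + β)) 0`. The Gaussian
density is radial, so the expectation splits into `(2π)⁻¹ ∫ r³ e^{-r²/2} dr = π⁻¹` times the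
integral of the angular factor, which is supported on `[-β, π/2]`, where it equals
`cos θ sin (θ + β)` and is integrated elementarily.
-/

open Real Set MeasureTheory ProbabilityTheory
open scoped NNReal

lemma integral_gaussianReal_prod_eq_integral_smul {E : Type*} [NormedAddCommGroup E]
    [NormedSpace ℝ E] {μ₁ μ₂ : ℝ} {v₁ v₂ : ℝ≥0} (hv₁ : v₁ ≠ 0) (hv₂ : v₂ ≠ 0)
    (f : ℝ × ℝ → E) :
    ∫ p, f p ∂((gaussianReal μ₁ v₁).prod (gaussianReal μ₂ v₂))
      = ∫ p, (gaussianPDFReal μ₁ v₁ p.1 * gaussianPDFReal μ₂ v₂ p.2) • f p := by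
  rw [gaussianReal_of_var_ne_zero _ hv₁, gaussianReal_of_var_ne_zero _ hv₂,
    prod_withDensity (measurable_gaussianPDF _ _) (measurable_gaussianPDF _ _),
    ← Measure.volume_eq_prod, integral_withDensity_eq_integral_toReal_smul (by fun_prop)
      (ae_of_all _ fun _ => ENNReal.mul_lt_top gaussianPDF_lt_top gaussianPDF_lt_top)]
  simp [gaussianPDF, ENNReal.toReal_mul, gaussianPDFReal_nonneg]

lemma gaussianPDFReal_zero_one_mul (a b : ℝ) :
    gaussianPDFReal 0 1 a * gaussianPDFReal 0 1 b = (2 * π)⁻¹ * exp (-(a ^ 2 + b ^ 2) / 2) := by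
  have h2π : √(2 * π) * √(2 * π) = 2 * π := mul_self_sqrt (by positivity)
  simp only [gaussianPDFReal, NNReal.coe_one, mul_one, sub_zero]
  rw [neg_add, add_div, exp_add, ← h2π]
  simp only [sqrt_mul_self (sqrt_nonneg _), mul_inv]
  ring

lemma integral_pow_three_mul_exp_neg_sq_div_two :
    ∫ r in Ioi (0 : ℝ), r ^ 3 * exp (-r ^ 2 / 2) = 2 := by
  have h := integral_rpow_mul_exp_neg_mul_rpow (p := 2) (q := 3) (b := 1 / 2)
    (by norm_num) (by norm_num) (by norm_num)
  norm_num [Gamma_two] at h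
  refine Eq.trans (setIntegral_congr_fun measurableSet_Ioi fun r _ => ?_) h
  ring_nf

lemma integral_gaussianReal_prod_of_polar_eq_sq_mul {F : ℝ × ℝ → ℝ} {g : ℝ → ℝ}
    (hF : ∀ r > 0, ∀ θ, F (r * cos θ, r * sin θ) = r ^ 2 * g θ) :
    ∫ p, F p ∂((gaussianReal 0 1).prod (gaussianReal 0 1)) = π⁻¹ * ∫ θ in Ioo (-π) π, g θ := by
  have htarget : polarCoord.target = Ioi 0 ×ˢ Ioo (-π) π := rfl
  rw [integral_gaussianReal_prod_eq_integral_smul one_ne_zero one_ne_zero,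
    ← integral_comp_polarCoord_symm, htarget]
  calc _ = ∫ p in Ioi 0 ×ˢ Ioo (-π) π, (2 * π)⁻¹ * (p.1 ^ 3 * exp (-p.1 ^ 2 / 2)) * g p.2 := by
        refine setIntegral_congr_fun (measurableSet_Ioi.prod measurableSet_Ioo) ?_
        rintro ⟨r, θ⟩ ⟨hr, -⟩
        have hsq : (r * cos θ) ^ 2 + (r * sin θ) ^ 2 = r ^ 2 := by
          linear_combination r ^ 2 * cos_sq_add_sin_sq θ
        simp only [polarCoord_symm_apply, smul_eq_mul, gaussianPDFReal_zero_one_mul, hsq,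
          hF r hr]
        ring
    _ = (∫ r in Ioi 0, (2 * π)⁻¹ * (r ^ 3 * exp (-r ^ 2 / 2))) * ∫ θ in Ioo (-π) π, g θ := by
        rw [Measure.volume_eq_prod]
        exact setIntegral_prod_mul (μ := volume) (ν := volume)
          (fun r => (2 * π)⁻¹ * (r ^ 3 * exp (-r ^ 2 / 2))) g _ _
    _ = π⁻¹ * ∫ θ in Ioo (-π) π, g θ := by
        rw [integral_const_mul, integral_pow_three_mul_exp_neg_sq_div_two]
        field_simp

lemma integral_cos_mul_sin_add (a b β : ℝ) :
    ∫ θ in a..b, cos θ * sin (θ + β)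
      = (cos (2 * a + β) - cos (2 * b + β)) / 4 + (b - a) * sin β / 2 := by
  have hderiv : ∀ θ, HasDerivAt (fun θ => -cos (2 * θ + β) / 4 + θ * sin β / 2)
      (cos θ * sin (θ + β)) θ := by
    intro θ
    have h := ((((hasDerivAt_id θ).const_mul 2).add_const β).cos.neg.div_const 4).add
      ((hasDerivAt_id θ).mul_const (sin β) |>.div_const 2)
    refine h.congr_deriv ?_
    rw [id, show 2 * θ + β = θ + (θ + β) by ring, sin_add θ (θ + β), sin_add θ β, cos_add]
    linear_combination -(sin β / 2) * sin_sq_add_cos_sq θ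
  rw [intervalIntegral.integral_eq_sub_of_hasDerivAt (fun θ _ => hderiv θ)
    (by apply Continuous.intervalIntegrable; fun_prop)]
  ring

lemma relu_cos_mul_relu_sin_add_eq_zero {β θ : ℝ} (hβ : β ∈ Icc (-(π / 2)) (π / 2))
    (hθ : θ ∈ Ioo (-π) π \ Icc (-β) (π / 2)) :
    max (cos θ) 0 * max (sin (θ + β)) 0 = 0 := by
  obtain ⟨⟨hπθ, hθπ⟩, hθβ⟩ := hθ
  rw [mem_Icc, not_and_or, not_le, not_le] at hθβ
  rcases lt_or_ge (π / 2) θ with hθ | hθ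
  · rw [max_eq_right (cos_nonpos_of_pi_div_two_le_of_le hθ.le (by linarith)), zero_mul]
  rcases le_or_gt θ (-(π / 2)) with hθ' | hθ'
  · rw [← cos_neg, max_eq_right (cos_nonpos_of_pi_div_two_le_of_le (by linarith) (by linarith)),
      zero_mul]
  have hsin : sin (θ + β) ≤ 0 :=
    sin_nonpos_of_nonpos_of_neg_pi_le (by linarith [hθβ.resolve_right hθ.not_gt])
      (by linarith [hβ.1])
  rw [max_eq_right hsin, mul_zero]

lemma integral_relu_cos_mul_relu_sin_add {β : ℝ} (hβ : β ∈ Icc (-(π / 2)) (π / 2)) :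
    ∫ θ in Ioo (-π) π, max (cos θ) 0 * max (sin (θ + β)) 0
      = cos β / 2 + π * sin β / 4 + β * sin β / 2 := by
  have hπ := pi_pos
  have hsub : Icc (-β) (π / 2) ⊆ Ioo (-π) π :=
    Icc_subset_Ioo (by linarith [hβ.2]) (by linarith)
  calc _ = ∫ θ in Icc (-β) (π / 2), max (cos θ) 0 * max (sin (θ + β)) 0 :=
        setIntegral_eq_of_subset_of_forall_sdiff_eq_zero measurableSet_Ioo hsub
          fun θ hθ => relu_cos_mul_relu_sin_add_eq_zero hβ hθ
    _ = ∫ θ in (-β)..(π / 2), cos θ * sin (θ + β) := by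
        rw [intervalIntegral.integral_of_le (by linarith [hβ.1]), ← integral_Icc_eq_integral_Ioc]
        refine setIntegral_congr_fun measurableSet_Icc fun θ ⟨hβθ, hθπ⟩ => ?_
        rw [max_eq_left (cos_nonneg_of_mem_Icc ⟨by linarith [hβ.2], hθπ⟩),
          max_eq_left (sin_nonneg_of_nonneg_of_le_pi (by linarith) (by linarith [hβ.2]))]
    _ = cos β / 2 + π * sin β / 4 + β * sin β / 2 := by
        rw [integral_cos_mul_sin_add, show 2 * -β + β = -β by ring,
          show 2 * (π / 2) + β = β + π by ring, cos_neg, cos_add_pi]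
        ring

/-- For `Z₁, Z₂` i.i.d. standard Gaussians and `c ∈ [−1,1]`,
`E[ReLU(Z₁)·ReLU(cZ₁ + √(1−c²)Z₂)] = (1/(2π))(c·arcsin c + √(1−c²)) + c/4`. -/
theorem gaussian_relu_correlation (c : ℝ) (hc : c ∈ Set.Icc (-1 : ℝ) 1) :
    (∫ p : ℝ × ℝ, max p.1 0 * max (c * p.1 + Real.sqrt (1 - c ^ 2) * p.2) 0
        ∂((gaussianReal 0 1).prod (gaussianReal 0 1)))
      = (1 / (2 * π)) * (c * Real.arcsin c + Real.sqrt (1 - c ^ 2)) + c / 4 := by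
  have hsin : sin (arcsin c) = c := sin_arcsin hc.1 hc.2
  have hcos : cos (arcsin c) = √(1 - c ^ 2) := cos_arcsin c
  have hpolar : ∀ r > 0, ∀ θ,
      max (r * cos θ) 0 * max (c * (r * cos θ) + √(1 - c ^ 2) * (r * sin θ)) 0
        = r ^ 2 * (max (cos θ) 0 * max (sin (θ + arcsin c)) 0) := by
    intro r hr θ
    have hrelu (x : ℝ) : max (r * x) 0 = r * max x 0 := by
      rw [mul_max_of_nonneg _ _ hr.le, mul_zero]
    rw [sin_add, hsin, hcos, show c * (r * cos θ) + √(1 - c ^ 2) * (r * sin θ)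
      = r * (sin θ * √(1 - c ^ 2) + cos θ * c) by ring, hrelu, hrelu]
    ring
  rw [integral_gaussianReal_prod_of_polar_eq_sq_mul hpolar,
    integral_relu_cos_mul_relu_sin_add (arcsin_mem_Icc c), hsin, hcos]
  field_simp
  ring
end

section
/- Let (ζ_l) be a sequence in (0,1) satisfying ζ_l = ζ_{l−1} − η·ζ_{l−1}^{3/2} + O(ζ_{l−1}^{5/2}) for some η > 0, with ζ_l → 0. Then ζ_l ~ 4/(η² l²) as l → ∞. -/
open Real Set Filter Topology

/-!
With `s_l = √ζ_l` the recursion reads `s_l² − s_{l+1}² = η s_l³ (1 + o(1))`, so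
`s_{l+1} / s_l → 1` and
`1/s_{l+1} − 1/s_l = (s_l² − s_{l+1}²) / (s_l s_{l+1} (s_l + s_{l+1})) → η/2`.
By Stolz–Cesàro `1/(l s_l) → η/2`, that is `l² ζ_l → 4/η²`.
-/

theorem tendsto_inv_smul_of_tendsto_sub_succ {E : Type*} [NormedAddCommGroup E]
    [NormedSpace ℝ E] {u : ℕ → E} {a : E}
    (h : Tendsto (fun n => u (n + 1) - u n) atTop (𝓝 a)) :
    Tendsto (fun n : ℕ => (n⁻¹ : ℝ) • u n) atTop (𝓝 a) := by
  have hmean : Tendsto (fun n : ℕ => (n⁻¹ : ℝ) • (u n - u 0)) atTop (𝓝 a) := by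
    simpa only [Finset.sum_range_sub] using h.cesaro_smul
  have hinitial : Tendsto (fun n : ℕ => (n⁻¹ : ℝ) • u 0) atTop (𝓝 0) := by
    simpa using (tendsto_inv_atTop_nhds_zero_nat (𝕜 := ℝ)).smul_const (u 0)
  simpa [smul_sub] using hmean.add hinitial

theorem tendsto_sub_succ_div_rpow {x : ℕ → ℝ} {η C p q : ℝ} (hx : ∀ l, 0 < x l)
    (hlim : Tendsto x atTop (𝓝 0)) (hpq : p < q)
    (hrec : ∀ l, |x (l + 1) - (x l - η * x l ^ p)| ≤ C * x l ^ q) :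
    Tendsto (fun l => (x l - x (l + 1)) / x l ^ p) atTop (𝓝 η) := by
  rw [← tendsto_sub_nhds_zero_iff]
  have hbound : ∀ l, ‖(x l - x (l + 1)) / x l ^ p - η‖ ≤ C * x l ^ (q - p) := by
    intro l
    have hxp : 0 < x l ^ p := rpow_pos_of_pos (hx l) p
    calc ‖(x l - x (l + 1)) / x l ^ p - η‖
        = |x (l + 1) - (x l - η * x l ^ p)| / x l ^ p := by
          rw [norm_eq_abs, ← abs_neg, ← abs_of_pos hxp, ← abs_div, abs_of_pos hxp]
          congr 1
          field_simp
          ring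
      _ ≤ C * x l ^ q / x l ^ p := by gcongr; exact hrec l
      _ = C * x l ^ (q - p) := by rw [rpow_sub (hx l), mul_div_assoc]
  have hsmall : Tendsto (fun l => C * x l ^ (q - p)) atTop (𝓝 0) := by
    simpa using (hlim.rpow_const_nhds_zero (sub_pos.2 hpq)).const_mul C
  exact squeeze_zero_norm hbound hsmall

theorem inv_sub_inv_eq_div_of_pos {s t : ℝ} (hs : 0 < s) (ht : 0 < t) :
    t⁻¹ - s⁻¹ = (s ^ 2 - t ^ 2) / s ^ 3 / (t / s * (1 + t / s)) := by
  field_simp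
  ring

theorem tendsto_inv_sub_inv_of_tendsto_sq_sub_sq_div_cube {s : ℕ → ℝ} {η : ℝ}
    (hs : ∀ l, 0 < s l) (hlim : Tendsto s atTop (𝓝 0))
    (hdec : Tendsto (fun l => (s l ^ 2 - s (l + 1) ^ 2) / s l ^ 3) atTop (𝓝 η)) :
    Tendsto (fun l => (s (l + 1))⁻¹ - (s l)⁻¹) atTop (𝓝 (η / 2)) := by
  set A := fun l => (s l ^ 2 - s (l + 1) ^ 2) / s l ^ 3
  have hratio_sq : ∀ l, 1 - s l * A l = (s (l + 1) / s l) ^ 2 := by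
    intro l
    have hsl := (hs l).ne'
    simp only [A]
    field_simp
    ring
  have hratio : Tendsto (fun l => s (l + 1) / s l) atTop (𝓝 1) := by
    have hsqrt := ((tendsto_const_nhds (x := (1 : ℝ))).sub (hlim.mul hdec)).sqrt
    simp only [hratio_sq, zero_mul, sub_zero, sqrt_one] at hsqrt
    simpa only [sqrt_sq (div_pos (hs _) (hs _)).le] using hsqrt
  simp_rw [inv_sub_inv_eq_div_of_pos (hs _) (hs _)]
  have hlimit := hdec.div (hratio.mul (tendsto_const_nhds.add hratio))
    (by norm_num : (1 : ℝ) * (1 + 1) ≠ 0)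
  rwa [one_add_one_eq_two, one_mul] at hlimit

/-- If `ζ_{l+1} = ζ_l − η ζ_l^{3/2} + O(ζ_l^{5/2})` with `ζ_l ∈ (0,1)` and `ζ_l → 0`,
then `ζ_l ~ 4/(η² l²)`. -/
theorem zeta_recursion_asymptotics (ζ : ℕ → ℝ) (η : ℝ) (hη : 0 < η)
    (hrange : ∀ l, ζ l ∈ Set.Ioo (0 : ℝ) 1)
    (hlim : Tendsto ζ atTop (𝓝 0))
    (hrec : ∃ C : ℝ, ∀ l, |ζ (l + 1) - (ζ l - η * ζ l ^ ((3 : ℝ) / 2))| ≤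
      C * ζ l ^ ((5 : ℝ) / 2)) :
    Tendsto (fun l : ℕ => ζ l * (l : ℝ) ^ 2) atTop (𝓝 (4 / η ^ 2)) := by
  obtain ⟨C, hC⟩ := hrec
  have hpos : ∀ l, 0 < ζ l := fun l => (hrange l).1
  have hdec := tendsto_sub_succ_div_rpow hpos hlim (by norm_num) hC
  have hsq : ∀ l, √(ζ l) ^ 2 = ζ l := fun l => sq_sqrt (hpos l).le
  have hcube : ∀ l, ζ l ^ ((3 : ℝ) / 2) = √(ζ l) ^ 3 := fun l => by
    rw [rpow_div_two_eq_sqrt _ (hpos l).le, ← rpow_natCast]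
    norm_num
  have hdiff := tendsto_inv_sub_inv_of_tendsto_sq_sub_sq_div_cube
    (fun l => sqrt_pos.2 (hpos l)) (by simpa using hlim.sqrt)
    (by simpa only [hsq, hcube] using hdec)
  have hstolz := tendsto_inv_smul_of_tendsto_sub_succ (u := fun l => (√(ζ l))⁻¹) hdiff
  have hlimit := (hstolz.inv₀ (by positivity)).pow 2
  convert hlimit using 2 with l
  · simp [mul_pow, hsq]
  · field_simp
    norm_num
end

section
/- Fix γ > 1 and ε ∈ (0,2). Let Q_x denote the x-quantile of |Z| where Z ~ N(0,1), i.e. P(|Z| ≤ Q_x) = x. Then there exists x_ε ∈ (0,1) such that for all x > x_ε, γ·Q_x > Q_{1 − (1−x)^{γ^{2−ε}}}. -/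
/-!
Let `T t = P(|Z| > t)`, so that `T (Q p) = 1 - p`. The Chernoff bound and the density on
`(t, t + 1]` give `exp (-((t + 1)² / 2 + 1)) ≤ T t ≤ exp (1 - t² / 2)` for `t ≥ 0`. As `x → 1`,
`q = Q x → ∞`, and with `u = 1 - x = T q` the lower bound gives
`u ^ κ ≥ exp (-κ ((q + 1)² / 2 + 1))` for `κ = γ ^ (2 - ε) < γ²`. This eventually exceeds
`exp (1 - (γ q)² / 2) ≥ T (γ q)`, and since `T` is antitone, `Q (1 - u ^ κ) < γ q`.
-/

open Real Set MeasureTheory ProbabilityTheory Filter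
open scoped NNReal

lemma ProbabilityTheory.hasSubgaussianMGF_id_gaussianReal (v : ℝ≥0) :
    HasSubgaussianMGF id v (gaussianReal 0 v) :=
  ⟨integrable_exp_mul_gaussianReal, fun t ↦ by simp [mgf_id_gaussianReal]⟩

lemma ProbabilityTheory.HasSubgaussianMGF.measure_abs_ge_le {Ω : Type*}
    {mΩ : MeasurableSpace Ω} {μ : Measure Ω} {X : Ω → ℝ} {c : ℝ≥0}
    (h : HasSubgaussianMGF X c μ) {ε : ℝ} (hε : 0 ≤ ε) :
    μ.real {ω | ε ≤ |X ω|} ≤ 2 * exp (-ε ^ 2 / (2 * c)) := by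
  have hsplit : {ω | ε ≤ |X ω|} = {ω | ε ≤ X ω} ∪ {ω | ε ≤ (-X) ω} := by
    ext ω
    simp only [mem_ofPred_eq, mem_union, Pi.neg_apply, le_abs]
  calc μ.real {ω | ε ≤ |X ω|} ≤ μ.real {ω | ε ≤ X ω} + μ.real {ω | ε ≤ (-X) ω} := by
        rw [hsplit]
        exact measureReal_union_le _ _
    _ ≤ exp (-ε ^ 2 / (2 * c)) + exp (-ε ^ 2 / (2 * c)) :=
        add_le_add (h.measure_ge_le hε) (h.neg.measure_ge_le hε)
    _ = 2 * exp (-ε ^ 2 / (2 * c)) := by ring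

lemma sqrt_two_mul_pi_le_exp_one : √(2 * π) ≤ exp 1 := by
  rw [sqrt_le_left (exp_pos 1).le]
  nlinarith [exp_one_gt_d9, pi_lt_d2]

lemma exp_neg_le_gaussianPDFReal {x s : ℝ} (hxs : |x| ≤ s) :
    exp (-(s ^ 2 / 2 + 1)) ≤ gaussianPDFReal 0 1 x := by
  have hsq : x ^ 2 ≤ s ^ 2 := sq_le_sq' (abs_le.1 hxs).1 (abs_le.1 hxs).2
  calc exp (-(s ^ 2 / 2 + 1)) = (exp 1)⁻¹ * exp (-(s ^ 2 / 2)) := by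
        rw [← exp_neg, ← exp_add]
        ring_nf
    _ ≤ (√(2 * π))⁻¹ * exp (-(x ^ 2 / 2)) := by
        gcongr
        exact sqrt_two_mul_pi_le_exp_one
    _ = gaussianPDFReal 0 1 x := by simp [gaussianPDFReal, neg_div]

noncomputable def foldedGaussianTail (t : ℝ) : ℝ := (gaussianReal 0 1).real {z | t < |z|}

lemma foldedGaussianTail_antitone : Antitone foldedGaussianTail :=
  fun _ _ hst ↦ measureReal_mono fun _ hz ↦ hst.trans_lt hz

lemma foldedGaussianTail_le_exp {t : ℝ} (ht : 0 ≤ t) :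
    foldedGaussianTail t ≤ exp (1 - t ^ 2 / 2) := by
  have h2e : (2 : ℝ) ≤ exp 1 := by linarith [add_one_le_exp 1]
  calc foldedGaussianTail t ≤ (gaussianReal 0 1).real {z | t ≤ |id z|} :=
        measureReal_mono fun _ hz ↦ le_of_lt (α := ℝ) hz
    _ ≤ 2 * exp (-t ^ 2 / (2 * ((1 : ℝ≥0) : ℝ))) :=
        (hasSubgaussianMGF_id_gaussianReal 1).measure_abs_ge_le ht
    _ ≤ exp 1 * exp (-(t ^ 2 / 2)) := by
        push_cast
        rw [neg_div, mul_one]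
        gcongr
    _ = exp (1 - t ^ 2 / 2) := by
        rw [← exp_add]
        ring_nf

lemma exp_le_foldedGaussianTail {t : ℝ} (ht : 0 ≤ t) :
    exp (-((t + 1) ^ 2 / 2 + 1)) ≤ foldedGaussianTail t := by
  have hpdf : ∀ x ∈ Ioc t (t + 1), exp (-((t + 1) ^ 2 / 2 + 1)) ≤ gaussianPDFReal 0 1 x :=
    fun x hx ↦ exp_neg_le_gaussianPDFReal <| by
      rw [abs_of_nonneg (ht.trans hx.1.le)]
      exact hx.2
  calc exp (-((t + 1) ^ 2 / 2 + 1)) = ∫ _ in Ioc t (t + 1), exp (-((t + 1) ^ 2 / 2 + 1)) := by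
        simp
    _ ≤ ∫ x in Ioc t (t + 1), gaussianPDFReal 0 1 x :=
        setIntegral_mono_on (integrableOn_const measure_Ioc_lt_top.ne)
          (integrable_gaussianPDFReal 0 1).integrableOn measurableSet_Ioc hpdf
    _ = (gaussianReal 0 1).real (Ioc t (t + 1)) := by
        rw [measureReal_def, gaussianReal_apply_eq_integral 0 one_ne_zero,
          ENNReal.toReal_ofReal
            (setIntegral_nonneg measurableSet_Ioc fun x _ ↦ gaussianPDFReal_nonneg 0 1 x)]
    _ ≤ foldedGaussianTail t := measureReal_mono fun z hz ↦ hz.1.trans_le (le_abs_self z)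

lemma foldedGaussianTail_quantile {Q : ℝ → ℝ}
    (hQ : ∀ p ∈ Ioo (0 : ℝ) 1, gaussianReal 0 1 {z : ℝ | |z| ≤ Q p} = ENNReal.ofReal p)
    {p : ℝ} (hp : p ∈ Ioo 0 1) : foldedGaussianTail (Q p) = 1 - p := by
  have hcompl : {z : ℝ | Q p < |z|} = {z | |z| ≤ Q p}ᶜ := by
    ext
    simp
  rw [foldedGaussianTail, hcompl,
    probReal_compl_eq_one_sub (measurableSet_le (by fun_prop) (by fun_prop)),
    measureReal_def, hQ p hp, ENNReal.toReal_ofReal hp.1.le]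

lemma eventually_mul_add_one_lt_mul_sq {κ γ : ℝ} (hκ : 0 ≤ κ) (hκγ : κ < γ ^ 2) :
    ∀ᶠ q in atTop, κ * ((q + 1) ^ 2 / 2 + 1) + 1 < (γ * q) ^ 2 / 2 := by
  filter_upwards [eventually_gt_atTop ((5 * κ + 2) / (γ ^ 2 - κ)), eventually_ge_atTop 1]
    with q hq hq1
  rw [div_lt_iff₀ (by linarith)] at hq
  nlinarith

lemma lt_quantile_of_one_sub_exp_lt {Q : ℝ → ℝ}
    (hQ : ∀ p ∈ Ioo (0 : ℝ) 1, gaussianReal 0 1 {z : ℝ | |z| ≤ Q p} = ENNReal.ofReal p)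
    {t x : ℝ} (ht : 0 ≤ t) (hx : x ∈ Ioo 0 1) (h : 1 - exp (-((t + 1) ^ 2 / 2 + 1)) < x) :
    t < Q x :=
  foldedGaussianTail_antitone.reflect_lt <| by
    rw [foldedGaussianTail_quantile hQ hx]
    linarith [exp_le_foldedGaussianTail ht]

lemma one_sub_rpow_mem_Ioo {x κ : ℝ} (hx : x ∈ Ioo (0 : ℝ) 1) (hκ : 0 < κ) :
    1 - (1 - x) ^ κ ∈ Ioo (0 : ℝ) 1 := by
  have hu0 : 0 < 1 - x := by linarith [hx.2]
  exact ⟨by linarith [rpow_lt_one hu0.le (by linarith [hx.1] : 1 - x < 1) hκ],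
    by linarith [rpow_pos_of_pos hu0 κ]⟩

/-- For `γ > 1` and `ε ∈ (0,2)`, there exists `x_ε ∈ (0,1)` such that for all `x > x_ε`,
`γ Q_x > Q_{1 − (1−x)^{γ^{2−ε}}}`, where `Q` is the quantile function of `|Z|`, `Z ~ N(0,1)`. -/
theorem folded_gaussian_quantile_ineq (γ ε : ℝ) (hγ : 1 < γ) (hε : ε ∈ Set.Ioo (0 : ℝ) 2)
    (Q : ℝ → ℝ)
    (hQ : ∀ p ∈ Set.Ioo (0 : ℝ) 1,
      (gaussianReal 0 1) {z : ℝ | |z| ≤ Q p} = ENNReal.ofReal p) :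
    ∃ xε ∈ Set.Ioo (0 : ℝ) 1, ∀ x ∈ Set.Ioo (0 : ℝ) 1, xε < x →
      γ * Q x > Q (1 - (1 - x) ^ (γ ^ (2 - ε))) := by
  have hγ0 : 0 < γ := by linarith
  set κ := γ ^ (2 - ε)
  have hκ0 : 0 < κ := rpow_pos_of_pos hγ0 _
  have hκγ : κ < γ ^ 2 := by
    simpa using rpow_lt_rpow_of_exponent_lt hγ (by norm_num; linarith [hε.1] : 2 - ε < (2 : ℕ))
  obtain ⟨q₀, hq₀⟩ := ((eventually_mul_add_one_lt_mul_sq hκ0.le hκγ).and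
    (eventually_ge_atTop 1)).exists_forall_of_atTop
  have hq₀0 : 0 ≤ q₀ := zero_le_one.trans (hq₀ q₀ le_rfl).2
  refine ⟨1 - exp (-((q₀ + 1) ^ 2 / 2 + 1)),
    ⟨sub_pos.2 (exp_lt_one_iff.2 (by linarith [sq_nonneg (q₀ + 1)])), sub_lt_self _ (exp_pos _)⟩,
    fun x hx hxε ↦ ?_⟩
  set q := Q x
  obtain ⟨hgap, hq1⟩ := hq₀ q (lt_quantile_of_one_sub_exp_lt hQ hq₀0 hx hxε).le
  have hu : exp (-((q + 1) ^ 2 / 2 + 1)) ≤ 1 - x := by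
    rw [← foldedGaussianTail_quantile hQ hx]
    exact exp_le_foldedGaussianTail (by linarith)
  refine foldedGaussianTail_antitone.reflect_lt ?_
  rw [foldedGaussianTail_quantile hQ (one_sub_rpow_mem_Ioo hx hκ0), sub_sub_cancel]
  calc foldedGaussianTail (γ * q) ≤ exp (1 - (γ * q) ^ 2 / 2) :=
        foldedGaussianTail_le_exp (by positivity)
    _ < exp (-((q + 1) ^ 2 / 2 + 1)) ^ κ := by
        rw [← exp_mul]
        exact exp_lt_exp.2 (by linarith)
    _ ≤ (1 - x) ^ κ := rpow_le_rpow (exp_pos _).le hu hκ0.le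
end
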